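/- Let P=(a,b,c) ∈ ℝ³ with a ≠ 0 and b ≠ 0. Set θ = arctan((c−ab/2)/√(a²+b²)), r = √(a²+b²+(c−ab/2)²), and let φ be an angle with cos φ = a/√(a²+b²) and sin φ = b/√(a²+b²) (so that cot φ = a/b, i.e. φ = arccot(a/b) or φ = arccot(a/b) − π according to the sign of b). Then the translation curve γ starting at the origin with initial velocity (cos θ cos φ, cos θ sin φ, sin θ) satisfies γ(r) = (a,b,c); moreover, if c ≠ ab/2 then r = |(c−ab/2)/sin θ|. -/

import Mathlib

noncomputable section

open Real

/-- The Nil translation curve starting at the origin with initial velocity `(u,v,w)`. -/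
def nilCurve (u v w : ℝ) (t : ℝ) : ℝ × ℝ × ℝ :=
  (u * t, v * t, u * v * t ^ 2 / 2 + w * t)

/-- Parameters of the translation curve reaching the point `(a,b,c)` with `a ≠ 0`, `b ≠ 0`:
with `θ = arctan((c - ab/2)/√(a²+b²))`, `r = √(a²+b²+(c-ab/2)²)` and `φ` chosen with
`cos φ = a/√(a²+b²)`, `sin φ = b/√(a²+b²)`, the unit-speed translation curve with
geographic parameters `(φ, θ)` reaches `(a,b,c)` at parameter `r`; moreover if
`c ≠ ab/2` then `r = |(c - ab/2)/sin θ|`. -/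
theorem nil_translation_curve_params_general (a b c : ℝ) (ha : a ≠ 0) (hb : b ≠ 0)
    (φ : ℝ)
    (hcos : Real.cos φ = a / Real.sqrt (a ^ 2 + b ^ 2))
    (hsin : Real.sin φ = b / Real.sqrt (a ^ 2 + b ^ 2)) :
    letI θ : ℝ := Real.arctan ((c - a * b / 2) / Real.sqrt (a ^ 2 + b ^ 2))
    letI r : ℝ := Real.sqrt (a ^ 2 + b ^ 2 + (c - a * b / 2) ^ 2)
    nilCurve (Real.cos θ * Real.cos φ) (Real.cos θ * Real.sin φ) (Real.sin θ) r = (a, b, c)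
      ∧ (c ≠ a * b / 2 → r = |(c - a * b / 2) / Real.sin θ|) := by
  set θ : ℝ := Real.arctan ((c - a * b / 2) / Real.sqrt (a ^ 2 + b ^ 2)) with hθ
  set r : ℝ := Real.sqrt (a ^ 2 + b ^ 2 + (c - a * b / 2) ^ 2) with hrdef
  set d : ℝ := c - a * b / 2 with hd
  set s : ℝ := Real.sqrt (a ^ 2 + b ^ 2) with hsdef
  have hs : 0 < s := Real.sqrt_pos.mpr (by positivity)
  have hs2 : s ^ 2 = a ^ 2 + b ^ 2 := Real.sq_sqrt (by positivity)
  have hr : 0 < r := by rw [hrdef]; exact Real.sqrt_pos.mpr (by positivity)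
  have hr2 : r ^ 2 = s ^ 2 + d ^ 2 := by
    rw [hrdef, hs2]; exact Real.sq_sqrt (by positivity)
  have hq : Real.sqrt (1 + (d / s) ^ 2) = r / s := by
    rw [show (1 : ℝ) + (d / s) ^ 2 = r ^ 2 / s ^ 2 by rw [hr2]; field_simp,
      Real.sqrt_div (by positivity), Real.sqrt_sq hr.le, Real.sqrt_sq hs.le]
  have hcosθ : Real.cos θ = s / r := by
    rw [hθ, Real.cos_arctan, hq]
    field_simp
  have hsinθ : Real.sin θ = d / r := by
    rw [hθ, Real.sin_arctan, hq]
    field_simp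
  constructor
  · simp only [nilCurve, hcosθ, hsinθ, hcos, hsin, ← hsdef, Prod.mk.injEq]
    refine ⟨by field_simp, by field_simp, ?_⟩
    have : c = a * b / 2 + d := by rw [hd]; ring
    rw [this]
    field_simp
  · intro hc
    have hdne : d ≠ 0 := fun h => hc (by rw [hd] at h; linarith)
    rw [hsinθ]
    rw [show d / (d / r) = r by field_simp]
    exact (abs_of_pos hr).symm
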